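/- Let E⁰ > 0, let E¹ ∈ ℝ³, and let E² be a real symmetric 3×3 matrix with strictly positive eigenvalues λ₁, λ₂, λ₃ and corresponding orthonormal eigenvectors R₁, R₂, R₃, such that λ₁ + λ₂ + λ₃ = E⁰. Set F_i = E¹·R_i. Then the matrix E⁰ E² − E¹ ⊗ E¹ is positive semidefinite and ‖E¹‖ ≤ E⁰ if and only if F₁²/λ₁ + F₂²/λ₂ + F₃²/λ₃ ≤ E⁰. -/

import Mathlib

open scoped InnerProductSpace

noncomputable section

/-- ℝ³ as a Euclidean space. -/
abbrev E3 := EuclideanSpace ℝ (Fin 3)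

/-!
In coordinates `cᵢ = ⟪Rᵢ, x⟫` with respect to the orthonormal eigenbasis, the quadratic form of
`E⁰E² − E¹ ⊗ E¹` is `E⁰ ∑ λᵢ cᵢ² − (∑ Fᵢ cᵢ)²`. By the weighted Cauchy–Schwarz inequality
`(∑ Fᵢ cᵢ)² ≤ (∑ Fᵢ²/λᵢ)(∑ λᵢ cᵢ²)`, whose equality case is `cᵢ = Fᵢ/λᵢ`, this form is nonnegative
exactly when `∑ Fᵢ²/λᵢ ≤ E⁰`. The norm bound then comes for free: every `λᵢ ≤ E⁰`, so
`‖E¹‖² = ∑ Fᵢ² ≤ E⁰ ∑ Fᵢ²/λᵢ ≤ E⁰²`.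
-/

open Matrix Finset

section Weighted

variable {ι : Type*} [Fintype ι]

theorem forall_sq_sum_mul_le_iff {w F : ι → ℝ} {e : ℝ} (hw : ∀ i, 0 < w i) (he : 0 ≤ e) :
    (∀ c : ι → ℝ, (∑ i, F i * c i) ^ 2 ≤ e * ∑ i, w i * c i ^ 2) ↔
      ∑ i, F i ^ 2 / w i ≤ e := by
  set S := ∑ i, F i ^ 2 / w i
  have hS : 0 ≤ S := sum_nonneg fun i _ => div_nonneg (sq_nonneg _) (hw i).le
  constructor
  · intro h
    have hF (i : ι) : F i * (F i / w i) = F i ^ 2 / w i := by ring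
    have hwF (i : ι) : w i * (F i / w i) ^ 2 = F i ^ 2 / w i := by field_simp [(hw i).ne']
    have hS2 := h fun i => F i / w i
    simp only [hF, hwF] at hS2
    nlinarith
  · intro hSe c
    calc (∑ i, F i * c i) ^ 2 ≤ S * ∑ i, w i * c i ^ 2 :=
          sum_sq_le_sum_mul_sum_of_sq_le_mul _ (fun i _ => div_nonneg (sq_nonneg _) (hw i).le)
            (fun i _ => mul_nonneg (hw i).le (sq_nonneg _))
            fun i _ => le_of_eq (by field_simp [(hw i).ne'])
      _ ≤ e * ∑ i, w i * c i ^ 2 := by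
          gcongr
          exact sum_nonneg fun i _ => mul_nonneg (hw i).le (sq_nonneg _)

theorem sum_sq_le_mul_sum_sq_div {w F : ι → ℝ} {m : ℝ} (hw : ∀ i, 0 < w i)
    (hwm : ∀ i, w i ≤ m) : ∑ i, F i ^ 2 ≤ m * ∑ i, F i ^ 2 / w i := by
  rw [mul_sum]
  refine sum_le_sum fun i _ => ?_
  calc F i ^ 2 = w i * (F i ^ 2 / w i) := by field_simp [(hw i).ne']
    _ ≤ m * (F i ^ 2 / w i) := by
      gcongr
      exacts [div_nonneg (sq_nonneg _) (hw i).le, hwm i]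

end Weighted

theorem OrthonormalBasis.norm_le_of_sum_inner_sq_div_le {ι E : Type*} [Fintype ι]
    [NormedAddCommGroup E] [InnerProductSpace ℝ E] (b : OrthonormalBasis ι ℝ E) {lam : ι → ℝ}
    {e : ℝ} (hlam : ∀ i, 0 < lam i) (hle : ∀ i, lam i ≤ e) {u : E}
    (hu : ∑ i, ⟪u, b i⟫_ℝ ^ 2 / lam i ≤ e) : ‖u‖ ≤ e := by
  have he : 0 ≤ e := (sum_nonneg fun i _ => div_nonneg (sq_nonneg _) (hlam i).le).trans hu
  refine (pow_le_pow_iff_left₀ (norm_nonneg u) he two_ne_zero).mp ?_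
  calc ‖u‖ ^ 2 = ∑ i, ⟪u, b i⟫_ℝ ^ 2 := (b.sum_sq_inner_left u).symm
    _ ≤ e * ∑ i, ⟪u, b i⟫_ℝ ^ 2 / lam i := sum_sq_le_mul_sum_sq_div hlam hle
    _ ≤ e ^ 2 := by rw [sq]; gcongr

theorem EuclideanSpace.ofLp_dotProduct_ofLp {n : Type*} [Fintype n]
    (x y : EuclideanSpace ℝ n) : x.ofLp ⬝ᵥ y.ofLp = ⟪x, y⟫_ℝ := by
  rw [EuclideanSpace.inner_eq_star_dotProduct, star_trivial, dotProduct_comm]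

section Eigenbasis

variable {ι n : Type*} [Fintype ι] [Fintype n] (b : OrthonormalBasis ι ℝ (EuclideanSpace ℝ n))
  {A : Matrix n n ℝ} {lam : ι → ℝ}

theorem dotProduct_mulVec_eq_sum_mul_inner_sq
    (hAb : ∀ i, A *ᵥ (b i).ofLp = lam i • (b i).ofLp) (x : EuclideanSpace ℝ n) :
    x.ofLp ⬝ᵥ (A *ᵥ x.ofLp) = ∑ i, lam i * ⟪b i, x⟫_ℝ ^ 2 := by
  conv_lhs => enter [2, 2]; rw [← b.sum_repr' x]
  simp only [WithLp.ofLp_sum, WithLp.ofLp_smul, mulVec_sum, mulVec_smul, hAb, dotProduct_sum,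
    dotProduct_smul, EuclideanSpace.ofLp_dotProduct_ofLp, smul_eq_mul, real_inner_comm x]
  exact sum_congr rfl fun i _ => by ring

theorem posSemidef_smul_sub_vecMulVec_iff (hA : A.IsSymm)
    (hAb : ∀ i, A *ᵥ (b i).ofLp = lam i • (b i).ofLp) (hlam : ∀ i, 0 < lam i)
    (u : EuclideanSpace ℝ n) {e : ℝ} (he : 0 ≤ e) :
    (e • A - vecMulVec u.ofLp u.ofLp).PosSemidef ↔ ∑ i, ⟪u, b i⟫_ℝ ^ 2 / lam i ≤ e := by
  have hherm : (e • A - vecMulVec u.ofLp u.ofLp).IsHermitian := by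
    refine (isHermitian_iff_isSymm.mpr (hA.smul e)).sub ?_
    simpa using (posSemidef_vecMulVec_self_star u.ofLp).isHermitian
  have hquad (x : EuclideanSpace ℝ n) :
      x.ofLp ⬝ᵥ ((e • A - vecMulVec u.ofLp u.ofLp) *ᵥ x.ofLp) =
        e * ∑ i, lam i * ⟪b i, x⟫_ℝ ^ 2 - ⟪u, x⟫_ℝ ^ 2 := by
    rw [sub_mulVec, smul_mulVec, dotProduct_sub, dotProduct_smul,
      dotProduct_mulVec_eq_sum_mul_inner_sq b hAb, vecMulVec_mulVec, dotProduct_smul,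
      EuclideanSpace.ofLp_dotProduct_ofLp, EuclideanSpace.ofLp_dotProduct_ofLp, op_smul_eq_mul,
      smul_eq_mul, real_inner_comm x, sq]
  let coords : (n → ℝ) ≃ (ι → ℝ) :=
    (WithLp.equiv 2 (n → ℝ)).symm.trans (b.repr.toEquiv.trans (WithLp.equiv 2 (ι → ℝ)))
  have hcoords (x : n → ℝ) (i : ι) : coords x i = ⟪b i, WithLp.toLp 2 x⟫_ℝ :=
    b.repr_apply_apply _ i
  rw [posSemidef_iff_dotProduct_mulVec, and_iff_right hherm, ← forall_sq_sum_mul_le_iff hlam he]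
  refine coords.forall_congr fun x => ?_
  simp only [hcoords, b.sum_inner_mul_inner, star_trivial]
  rw [show x ⬝ᵥ _ = _ from hquad (WithLp.toLp 2 x), sub_nonneg]

end Eigenbasis

theorem realizability_alternative
    (E0 : ℝ) (hE0 : 0 < E0)
    (E1 : E3)
    (E2 : Matrix (Fin 3) (Fin 3) ℝ) (hE2sym : E2.IsSymm)
    (lam : Fin 3 → ℝ) (hlam_pos : ∀ i, 0 < lam i)
    (R : Fin 3 → E3) (hR : Orthonormal ℝ R)
    (heig : ∀ i, E2.mulVec (fun a => R i a) = fun a => lam i * R i a)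
    (hsum : lam 0 + lam 1 + lam 2 = E0)
    (F : Fin 3 → ℝ) (hF : ∀ i, F i = ⟪E1, R i⟫_ℝ) :
    ((Matrix.of fun a b => E0 * E2 a b - E1 a * E1 b).PosSemidef ∧ ‖E1‖ ≤ E0) ↔
      F 0 ^ 2 / lam 0 + F 1 ^ 2 / lam 1 + F 2 ^ 2 / lam 2 ≤ E0 := by
  obtain ⟨B, rfl⟩ : ∃ B : OrthonormalBasis (Fin 3) ℝ E3, ⇑B = R :=
    ⟨(basisOfOrthonormalOfCardEqFinrank hR (by simp)).toOrthonormalBasis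
      (by rwa [coe_basisOfOrthonormalOfCardEqFinrank]), by simp⟩
  have hM : (Matrix.of fun a b => E0 * E2 a b - E1 a * E1 b) =
      E0 • E2 - vecMulVec E1.ofLp E1.ofLp := by
    ext a b
    simp [vecMulVec_apply]
  have hlam_le (i : Fin 3) : lam i ≤ E0 := by
    rw [← hsum, ← Fin.sum_univ_three lam]
    exact single_le_sum (fun j _ => (hlam_pos j).le) (mem_univ i)
  have hFsum : ∑ i, ⟪E1, B i⟫_ℝ ^ 2 / lam i =
      F 0 ^ 2 / lam 0 + F 1 ^ 2 / lam 1 + F 2 ^ 2 / lam 2 := by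
    simp only [Fin.sum_univ_three, hF]
  rw [hM, posSemidef_smul_sub_vecMulVec_iff B hE2sym heig hlam_pos E1 hE0.le, hFsum]
  exact and_iff_left_of_imp fun h => B.norm_le_of_sum_inner_sq_div_le hlam_pos hlam_le (hFsum ▸ h)
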